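/- Let (s^t) be any asynchronous play in which the evader's move at each step equals ν* applied to the current state and the pursuers' chosen move, while the pursuers' moves are arbitrary (possibly history-dependent). Then for every t such that f(s^τ)=0 for all τ<t, it holds that D(s^t)+t ≥ D(s^0) in ℕ∪{∞}; i.e., along any ν*-consistent asynchronous play the distance table decreases by at most one per step, and if D(s^0)=∞ then D(s^t)=∞ for all t. -/

import Mathlib

open scoped ENat

/-- Closed neighborhood `N[v]`: stay at `v` or cross one edge of `G`. -/
def closedNbr {V : Type*} (G : SimpleGraph V) (v : V) : Set V :=
  {u | u = v ∨ G.Adj v u}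

/-- Joint pursuer moves: all `m` pursuers move simultaneously, each within a
closed neighborhood. -/
def jointNbr {V : Type*} (G : SimpleGraph V) {m : ℕ} (sp : Fin m → V) :
    Set (Fin m → V) :=
  {np | ∀ i, np i ∈ closedNbr G (sp i)}

/-- Capture sets `C_k`: `C_0 = {s | f s = 1}` and
`C_{k+1} = C_k ∪ {(s_p,s_e) | ∃ n_p ∈ N[s_p], ∀ n_e ∈ N[s_e], (n_p,n_e) ∈ C_k}`. -/
def captureSet {V : Type*} (G : SimpleGraph V) {m : ℕ}
    (f : (Fin m → V) × V → Bool) : ℕ → Set ((Fin m → V) × V)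
  | 0 => {s | f s = true}
  | k + 1 => captureSet G f k ∪
      {s | ∃ np ∈ jointNbr G s.1, ∀ ne ∈ closedNbr G s.2, (np, ne) ∈ captureSet G f k}

/-- The distance table `D(s) = min {k | s ∈ C_k}` (and `∞` if `s` lies in no `C_k`). -/
noncomputable def Dtab {V : Type*} (G : SimpleGraph V) {m : ℕ}
    (f : (Fin m → V) × V → Bool) (s : (Fin m → V) × V) : ℕ∞ :=
  sInf {k : ℕ∞ | ∃ n : ℕ, k = n ∧ s ∈ captureSet G f n}

/-- A DP asynchronous evader policy: a stationary policy with
`ν*(s_p,s_e,n_p) ∈ argmax_{n_e ∈ N[s_e]} D(n_p,n_e)`. -/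
def IsDPEvaderAsync {V : Type*} (G : SimpleGraph V) {m : ℕ}
    (f : (Fin m → V) × V → Bool)
    (ν : (Fin m → V) × V → (Fin m → V) → V) : Prop :=
  ∀ (s : (Fin m → V) × V) (np : Fin m → V), ν s np ∈ closedNbr G s.2 ∧
    ∀ ne ∈ closedNbr G s.2, Dtab G f (np, ne) ≤ Dtab G f (np, ν s np)

/-! The table satisfies the Bellman inequality `D(s) ≤ D(n_p, n_e) + 1` for every pursuer move
`n_p` once `n_e` maximises `D(n_p, ·)` over `N[s_e]`: if that maximum is `k`, then `n_p` forces
every evader reply into `C_k`, so `s ∈ C_{k+1}`. The DP evader plays exactly such a maximiser,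
so along the play `D` drops by at most one per step; and since captured states have `D = 0`,
a play starting at `D = ∞` is never captured and keeps `D = ∞`. -/

section Dtab

variable {V : Type*} (G : SimpleGraph V) {m : ℕ} (f : (Fin m → V) × V → Bool)

theorem captureSet_monotone : Monotone (captureSet G f) :=
  monotone_nat_of_le_succ fun _ => Set.subset_union_left

variable {G f}

theorem Dtab_le_iff {s : (Fin m → V) × V} {n : ℕ} :
    Dtab G f s ≤ n ↔ s ∈ captureSet G f n := by
  refine ⟨fun h => ?_, fun h => sInf_le ⟨n, rfl, h⟩⟩
  have hne : {k : ℕ∞ | ∃ j : ℕ, k = j ∧ s ∈ captureSet G f j}.Nonempty :=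
    Set.nonempty_iff_ne_empty.2 fun he => by simp [Dtab, he] at h
  obtain ⟨j, hj, hmem⟩ := csInf_mem hne
  have hjn : (j : ℕ∞) ≤ n := hj ▸ h
  exact captureSet_monotone G f (by exact_mod_cast hjn) hmem

theorem Dtab_eq_zero_of_captured {s : (Fin m → V) × V} (hs : f s = true) : Dtab G f s = 0 :=
  nonpos_iff_eq_zero.1 (Dtab_le_iff (n := 0) |>.2 hs)

theorem Dtab_le_add_one_of_forall_le {s : (Fin m → V) × V} {np : Fin m → V}
    (hnp : np ∈ jointNbr G s.1) {d : ℕ∞} (hd : ∀ ne ∈ closedNbr G s.2, Dtab G f (np, ne) ≤ d) :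
    Dtab G f s ≤ d + 1 := by
  induction d using ENat.recTopCoe with
  | top => simp
  | coe k =>
    have hs : s ∈ captureSet G f (k + 1) :=
      Or.inr ⟨np, hnp, fun ne hne => Dtab_le_iff.1 (hd ne hne)⟩
    exact_mod_cast Dtab_le_iff.2 hs

theorem IsDPEvaderAsync.Dtab_le_add_one {ν : (Fin m → V) × V → (Fin m → V) → V}
    (hν : IsDPEvaderAsync G f ν) (s : (Fin m → V) × V) {np : Fin m → V}
    (hnp : np ∈ jointNbr G s.1) : Dtab G f s ≤ Dtab G f (np, ν s np) + 1 :=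
  Dtab_le_add_one_of_forall_le hnp (hν s np).2

end Dtab

theorem dtab_decreases_at_most_one_along_dp_evader_play_general {V : Type*}
    (G : SimpleGraph V) (m : ℕ) (f : (Fin m → V) × V → Bool)
    (ν : (Fin m → V) × V → (Fin m → V) → V) (hν : IsDPEvaderAsync G f ν)
    (σ : ℕ → (Fin m → V) × V)
    (hplay : ∀ t, f (σ t) = false →
      (σ (t + 1)).1 ∈ jointNbr G (σ t).1 ∧ (σ (t + 1)).2 = ν (σ t) ((σ (t + 1)).1)) :
    (∀ t : ℕ, (∀ τ < t, f (σ τ) = false) →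
        Dtab G f (σ 0) ≤ Dtab G f (σ t) + (t : ℕ∞)) ∧
    (Dtab G f (σ 0) = ⊤ → ∀ t : ℕ, Dtab G f (σ t) = ⊤) := by
  have hstep (t : ℕ) (ht : f (σ t) = false) : Dtab G f (σ t) ≤ Dtab G f (σ (t + 1)) + 1 := by
    obtain ⟨hnp, hevader⟩ := hplay t ht
    simpa only [← hevader] using hν.Dtab_le_add_one (σ t) hnp
  refine ⟨fun t => ?_, fun htop t => ?_⟩
  · induction t with
    | zero => simp
    | succ t ih =>
      intro hf
      calc Dtab G f (σ 0) ≤ Dtab G f (σ t) + t := ih fun τ hτ => hf τ (by omega)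
        _ ≤ Dtab G f (σ (t + 1)) + 1 + t := by gcongr; exact hstep t (hf t t.lt_succ_self)
        _ = Dtab G f (σ (t + 1)) + ((t + 1 : ℕ) : ℕ∞) := by push_cast; ring
  · induction t with
    | zero => exact htop
    | succ t ih =>
      have ht : f (σ t) = false :=
        Bool.eq_false_iff.2 fun hc => by simp [Dtab_eq_zero_of_captured hc] at ih
      simpa [ih] using hstep t ht

/-- Along any asynchronous play in which the evader's move at each step equals `ν*`
applied to the current state and the pursuers' chosen move (the pursuers moving
arbitrarily): for every `t` with `f(s^τ) = 0` for all `τ < t` we have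
`D(s^t) + t ≥ D(s^0)` in `ℕ∪{∞}` — the distance table decreases by at most one per
step — and if `D(s^0) = ∞` then `D(s^t) = ∞` for all `t`. -/
theorem dtab_decreases_at_most_one_along_dp_evader_play {V : Type*} [Fintype V]
    (G : SimpleGraph V) (m : ℕ) (hm : 1 ≤ m) (f : (Fin m → V) × V → Bool)
    (ν : (Fin m → V) × V → (Fin m → V) → V) (hν : IsDPEvaderAsync G f ν)
    (σ : ℕ → (Fin m → V) × V)
    (hplay : ∀ t, f (σ t) = false →
      (σ (t + 1)).1 ∈ jointNbr G (σ t).1 ∧ (σ (t + 1)).2 = ν (σ t) ((σ (t + 1)).1)) :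
    (∀ t : ℕ, (∀ τ < t, f (σ τ) = false) →
        Dtab G f (σ 0) ≤ Dtab G f (σ t) + (t : ℕ∞)) ∧
    (Dtab G f (σ 0) = ⊤ → ∀ t : ℕ, Dtab G f (σ t) = ⊤) :=
  dtab_decreases_at_most_one_along_dp_evader_play_general G m f ν hν σ hplay
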